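/- Let n ≥ 2 and let Y be a Banach space, S : Ẇ^{1,n}(ℝⁿ; E) → Y a bounded linear operator with closed range (E finite-dimensional). Assume the approximation property: for every ε > 0 there is C_ε such that for every w ∈ Ẇ^{1,n}(ℝⁿ; E) there exists u ∈ Ẇ^{1,n} ∩ L^∞(ℝⁿ; E) with ‖S(w) − S(u)‖_Y ≤ ε ‖Dw‖_{Lⁿ} and ‖Du‖_{Lⁿ} + ‖u‖_{L^∞} ≤ C_ε ‖Dw‖_{Lⁿ}, together with the open-mapping bound: for every v there is w with Sw = Sv and ‖Dw‖_{Lⁿ} ≤ C₀‖Sv‖_Y. Then for every v ∈ Ẇ^{1,n}(ℝⁿ; E) there exists u ∈ Ẇ^{1,n} ∩ L^∞ with S(u) = S(v) and ‖u‖_{L^∞} + ‖Du‖_{Lⁿ} ≤ C ‖Dv‖_{Lⁿ}. -/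
import Mathlib


/-- Abstract Bourgain–Brezis iteration.  `X` is a seminormed space
(playing `Ẇ^{1,n}(ℝⁿ; E)` with seminorm `‖D·‖_{Lⁿ}`), `Z` a Banach space (playing
`Ẇ^{1,n} ∩ L^∞` with norm `‖·‖_{L^∞} + ‖D·‖_{Lⁿ}`) embedded in `X` by a
norm-nonincreasing linear map `j`, `Y` a Banach space and `S : X → Y` bounded
linear.  Assume the open-mapping bound (closed range): for every `v` there is `w`
with `S w = S v` and `‖w‖ ≤ C₀ ‖S v‖; and the approximation property: for every
`ε > 0` there is `C_ε` such that every `w ∈ X` admits `u ∈ Z` with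
`‖S w − S (j u)‖ ≤ ε ‖w‖` and `‖u‖ ≤ C_ε ‖w‖`.  Then for every `v ∈ X` there is
`u ∈ Z` with `S (j u) = S v` and `‖u‖ ≤ C ‖v‖`. -/
theorem stmt15 {X Y Z : Type*}
    [SeminormedAddCommGroup X] [NormedSpace ℝ X]
    [NormedAddCommGroup Y] [NormedSpace ℝ Y] [CompleteSpace Y]
    [NormedAddCommGroup Z] [NormedSpace ℝ Z] [CompleteSpace Z]
    (j : Z →ₗ[ℝ] X) (hj : ∀ z : Z, ‖j z‖ ≤ ‖z‖)
    (S : X →L[ℝ] Y)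
    (C₀ : ℝ) (hC₀ : 0 < C₀)
    (hopen : ∀ v : X, ∃ w : X, S w = S v ∧ ‖w‖ ≤ C₀ * ‖S v‖)
    (happrox : ∀ ε : ℝ, 0 < ε → ∃ Cε : ℝ, 0 < Cε ∧ ∀ w : X, ∃ u : Z,
      ‖S w - S (j u)‖ ≤ ε * ‖w‖ ∧ ‖u‖ ≤ Cε * ‖w‖) :
    ∃ C : ℝ, 0 < C ∧ ∀ v : X, ∃ u : Z, S (j u) = S v ∧ ‖u‖ ≤ C * ‖v‖ := by
  obtain ⟨Cε, hCε, happ⟩ := happrox (1 / (2 * C₀)) (by positivity)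
  choose w hw hwn using hopen
  choose u hu hun using happ
  refine ⟨2 * Cε * C₀ * ‖S‖ + 1, by positivity, fun v => ?_⟩
  -- the iteration
  set V : ℕ → X := fun n => Nat.rec v (fun _ p => w p - j (u (w p))) n with hV
  set U : ℕ → Z := fun n => u (w (V n)) with hU
  have hVsucc : ∀ n, V (n + 1) = w (V n) - j (U n) := fun n => rfl
  have hSstep : ∀ n, S (V (n + 1)) = S (V n) - S (j (U n)) := by
    intro n
    rw [hVsucc n, map_sub, hw (V n)]
  have hSdecay : ∀ n, ‖S (V (n + 1))‖ ≤ (1 / 2) * ‖S (V n)‖ := by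
    intro n
    have h1 : ‖S (V (n + 1))‖ ≤ (1 / (2 * C₀)) * ‖w (V n)‖ := by
      rw [hVsucc n, map_sub]
      exact hu (w (V n))
    have h2 : ‖w (V n)‖ ≤ C₀ * ‖S (V n)‖ := hwn (V n)
    calc ‖S (V (n + 1))‖ ≤ (1 / (2 * C₀)) * (C₀ * ‖S (V n)‖) :=
          h1.trans (by gcongr)
      _ = (1 / 2) * ‖S (V n)‖ := by field_simp
  have hSbound : ∀ n, ‖S (V n)‖ ≤ (1 / 2) ^ n * ‖S v‖ := by
    intro n
    induction n with
    | zero => simp [hV]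
    | succ n ih =>
        calc ‖S (V (n + 1))‖ ≤ (1 / 2) * ‖S (V n)‖ := hSdecay n
          _ ≤ (1 / 2) * ((1 / 2) ^ n * ‖S v‖) := by gcongr
          _ = (1 / 2) ^ (n + 1) * ‖S v‖ := by ring
  have hUbound : ∀ n, ‖U n‖ ≤ Cε * C₀ * ‖S v‖ * (1 / 2) ^ n := by
    intro n
    calc ‖U n‖ ≤ Cε * ‖w (V n)‖ := hun (w (V n))
      _ ≤ Cε * (C₀ * ‖S (V n)‖) := by gcongr; exact hwn (V n)
      _ ≤ Cε * (C₀ * ((1 / 2) ^ n * ‖S v‖)) := by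
          gcongr; exact hSbound n
      _ = Cε * C₀ * ‖S v‖ * (1 / 2) ^ n := by ring
  have hgeo : Summable fun n : ℕ => Cε * C₀ * ‖S v‖ * (1 / 2) ^ n :=
    (summable_geometric_of_lt_one (by norm_num) (by norm_num)).mul_left _
  have hnorm : Summable fun n => ‖U n‖ :=
    hgeo.of_nonneg_of_le (fun n => norm_nonneg _) hUbound
  have hUsum : Summable U := hnorm.of_norm
  set z := ∑' n, U n with hz
  have jL : Z →L[ℝ] X := j.mkContinuous 1 (fun z => by simpa using hj z)
  have hjL : Continuous j := (j.mkContinuous 1 (fun z => by simpa using hj z)).continuous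
  have hSjsum : HasSum (fun n => S (j (U n))) (S (j z)) := by
    have := ((S.comp ⟨j, hjL⟩).hasSum hUsum.hasSum)
    simpa using this
  have hSVtend : Filter.Tendsto (fun n => S (V n)) Filter.atTop (nhds 0) := by
    apply squeeze_zero_norm hSbound
    have : Filter.Tendsto (fun n : ℕ => (1 / 2 : ℝ) ^ n) Filter.atTop (nhds 0) :=
      tendsto_pow_atTop_nhds_zero_of_lt_one (by norm_num) (by norm_num)
    simpa using this.mul_const ‖S v‖
  have hSjz : S (j z) = S v := by
    have htel : ∀ N, ∑ n ∈ Finset.range N, S (j (U n)) = S v - S (V N) := by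
      intro N
      have : ∀ n, S (j (U n)) = S (V n) - S (V (n + 1)) := by
        intro n; rw [hSstep n]; abel
      simp only [this]
      rw [Finset.sum_range_sub' (fun n => S (V n))]
      rfl
    have h1 : Filter.Tendsto (fun N => ∑ n ∈ Finset.range N, S (j (U n)))
        Filter.atTop (nhds (S (j z))) := hSjsum.tendsto_sum_nat
    have h2 : Filter.Tendsto (fun N => ∑ n ∈ Finset.range N, S (j (U n)))
        Filter.atTop (nhds (S v)) := by
      simp only [htel]
      simpa using (tendsto_const_nhds (x := S v)).sub hSVtend
    exact tendsto_nhds_unique h1 h2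
  refine ⟨z, hSjz, ?_⟩
  have hzn : ‖z‖ ≤ ∑' n, ‖U n‖ := norm_tsum_le_tsum_norm hnorm
  have htsum : ∑' n, ‖U n‖ ≤ Cε * C₀ * ‖S v‖ * 2 := by
    calc ∑' n, ‖U n‖ ≤ ∑' n, Cε * C₀ * ‖S v‖ * (1 / 2) ^ n :=
          Summable.tsum_le_tsum hUbound hnorm hgeo
      _ = Cε * C₀ * ‖S v‖ * (2 : ℝ) := by
          rw [tsum_mul_left, tsum_geometric_of_lt_one (by norm_num) (by norm_num)]
          norm_num
  have hSv : ‖S v‖ ≤ ‖S‖ * ‖v‖ := S.le_opNorm v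
  calc ‖z‖ ≤ Cε * C₀ * ‖S v‖ * 2 := hzn.trans htsum
    _ ≤ Cε * C₀ * (‖S‖ * ‖v‖) * 2 := by gcongr
    _ ≤ (2 * Cε * C₀ * ‖S‖ + 1) * ‖v‖ := by nlinarith [norm_nonneg v]
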